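/- A matching M in a graph G is uniquely restricted if and only if G contains no M-alternating cycle. -/

import Mathlib

open SimpleGraph

/-- The subgraph of `G` consisting of those pairs in `s` that are actually edges of `G`. -/
def pairsSubgraph {V : Type*} (G : SimpleGraph V) (s : Set (V × V)) : G.Subgraph where
  verts := {v | ∃ a b, (G.Adj a b ∧ ((a, b) ∈ s ∨ (b, a) ∈ s)) ∧ (v = a ∨ v = b)}
  Adj a b := G.Adj a b ∧ ((a, b) ∈ s ∨ (b, a) ∈ s)
  adj_sub h := h.1
  edge_vert h := ⟨_, _, h, Or.inl rfl⟩
  symm := ⟨fun _ _ h => ⟨h.1.symm, h.2.symm⟩⟩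

/-- `M` is an induced matching in `G`: it is a matching, and `G(M)`, the subgraph of `G`
induced by the set `V(M)` of covered vertices (which is `M.verts` for a matching subgraph),
is `1`-regular, i.e. every vertex of `G(M)` has exactly one neighbour in `G(M)`. -/
def IsInducedMatching {V : Type*} (G : SimpleGraph V) (M : G.Subgraph) : Prop :=
  M.IsMatching ∧ ∀ v : M.verts, ∃! w : M.verts, (G.induce M.verts).Adj v w

/-- `M` is an acyclic matching in `G`: it is a matching and `G(M)` is a forest. -/
def IsAcyclicMatching {V : Type*} (G : SimpleGraph V) (M : G.Subgraph) : Prop :=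
  M.IsMatching ∧ (G.induce M.verts).IsAcyclic

/-- `M` is a uniquely restricted matching in `G`: it is a matching and it is the unique
perfect matching of `G(M)`, i.e. the unique matching of `G` covering exactly `M.verts`. -/
def IsURMatching {V : Type*} (G : SimpleGraph V) (M : G.Subgraph) : Prop :=
  M.IsMatching ∧ ∀ M' : G.Subgraph, M'.IsMatching → M'.verts = M.verts → M' = M

/-- The (ordinary) matching number `ν(G)`: the maximum cardinality of a matching in `G`. -/
noncomputable def nuMatch {V : Type*} (G : SimpleGraph V) : ℕ :=
  sSup {k : ℕ | ∃ M : G.Subgraph, M.IsMatching ∧ M.edgeSet.ncard = k}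

/-- The uniquely restricted matching number `ν_ur(G)`. -/
noncomputable def nuUR {V : Type*} (G : SimpleGraph V) : ℕ :=
  sSup {k : ℕ | ∃ M : G.Subgraph, IsURMatching G M ∧ M.edgeSet.ncard = k}

/-- The acyclic matching number `ν_ac(G)`. -/
noncomputable def nuAc {V : Type*} (G : SimpleGraph V) : ℕ :=
  sSup {k : ℕ | ∃ M : G.Subgraph, IsAcyclicMatching G M ∧ M.edgeSet.ncard = k}

/-- The induced (strong) matching number `ν_s(G)`. -/
noncomputable def nuS {V : Type*} (G : SimpleGraph V) : ℕ :=
  sSup {k : ℕ | ∃ M : G.Subgraph, IsInducedMatching G M ∧ M.edgeSet.ncard = k}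

/-- `cyc` is an `M`-alternating cycle in `G`: a cycle of `G` whose edges alternate between
edges of `M` and edges of `E(G) \ M`. -/
def IsAltCycle {V : Type*} (G : SimpleGraph V) (M : G.Subgraph) {v : V}
    (cyc : G.Walk v v) : Prop :=
  cyc.IsCycle ∧ cyc.toSubgraph.spanningCoe.IsAlternating M.spanningCoe

/-!
If `M'` is a second matching covering `V(M)`, every covered vertex has one `M`-edge and one
`M'`-edge, so `M ∆ M'` is a nonempty disjoint union of cycles on which `M` alternates.
Conversely, an `M`-alternating cycle `C` only visits vertices covered by `M`, so `M ∆ C` is a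
matching covering exactly `V(M)`, and it differs from `M`.
-/

namespace SimpleGraph

open scoped symmDiff

variable {V : Type*} {G C : SimpleGraph V} {M : G.Subgraph} {v w : V}

lemma symmDiff_adj (H H' : SimpleGraph V) :
    (H ∆ H').Adj v w ↔ H.Adj v w ∧ ¬H'.Adj v w ∨ H'.Adj v w ∧ ¬H.Adj v w :=
  Iff.rfl

lemma IsAlternating.mem_verts_of_adj (halt : C.IsAlternating M.spanningCoe) (hC : C.IsCycles)
    (h : C.Adj v w) : v ∈ M.verts := by
  obtain ⟨w', hww', hw'⟩ := hC.other_adj_of_adj h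
  by_cases hvw : M.Adj v w
  · exact M.edge_vert hvw
  · exact M.edge_vert (by simpa [hvw] using halt hww' h hw')

lemma Subgraph.IsMatching.existsUnique_adj_symmDiff (hM : M.IsMatching) (hC : C.IsCycles)
    (halt : C.IsAlternating M.spanningCoe) (hv : v ∈ M.verts) :
    ∃! w, (M.spanningCoe ∆ C).Adj v w := by
  obtain ⟨w, hvw, hw⟩ := hM hv
  simp only [symmDiff_adj, Subgraph.spanningCoe_adj]
  by_cases hCvw : C.Adj v w
  · obtain ⟨w', ⟨hww', hvw'⟩, hw'⟩ := hC.existsUnique_ne_adj hCvw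
    refine ⟨w', Or.inr ⟨hvw', fun h => hww' (hw w' h).symm⟩, ?_⟩
    rintro y (⟨hy, hCy⟩ | ⟨hCy, hy⟩)
    · exact absurd (hw y hy ▸ hCvw) hCy
    · exact hw' y ⟨fun h => hy (h ▸ hvw), hCy⟩
  · refine ⟨w, Or.inl ⟨hvw, hCvw⟩, ?_⟩
    rintro y (⟨hy, -⟩ | ⟨hCy, hy⟩)
    · exact hw y hy
    · obtain ⟨y', hyy', hCy'⟩ := hC.other_adj_of_adj hCy
      have hy' : M.Adj v y' := by simpa [hy] using halt hyy' hCy hCy'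
      exact absurd (hw y' hy' ▸ hCy') hCvw

lemma Subgraph.IsMatching.exists_isMatching_symmDiff (hM : M.IsMatching) (hCG : C ≤ G)
    (hC : C.IsCycles) (halt : C.IsAlternating M.spanningCoe) :
    ∃ M' : G.Subgraph, M'.IsMatching ∧ M'.verts = M.verts ∧
      M'.spanningCoe = M.spanningCoe ∆ C := by
  refine ⟨{ verts := M.verts
            Adj := (M.spanningCoe ∆ C).Adj
            adj_sub := fun h => (symmDiff_le_sup.trans (sup_le M.spanningCoe_le hCG)) h
            edge_vert := ?_
            symm := (M.spanningCoe ∆ C).symm }, ?_, rfl, rfl⟩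
  · intro v w hvw
    rcases hvw with ⟨hvw, -⟩ | ⟨hvw, -⟩
    exacts [M.edge_vert hvw, halt.mem_verts_of_adj hC hvw]
  · exact fun v hv => hM.existsUnique_adj_symmDiff hC halt hv

variable {G' : SimpleGraph V} {M' : G'.Subgraph}

lemma Subgraph.IsMatching.symmDiff_isCycles (hM : M.IsMatching) (hM' : M'.IsMatching)
    (hverts : M.verts = M'.verts) : (M.spanningCoe ∆ M'.spanningCoe).IsCycles := by
  rintro v ⟨y, hy⟩
  rw [SimpleGraph.mem_neighborSet, symmDiff_adj] at hy
  have hvM : v ∈ M.verts := by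
    rcases hy with ⟨hy, -⟩ | ⟨hy, -⟩
    exacts [M.edge_vert hy, hverts ▸ M'.edge_vert hy]
  obtain ⟨w, hw, hwu⟩ := hM hvM
  obtain ⟨w', hw', hwu'⟩ := hM' (hverts ▸ hvM)
  have hww' : w ≠ w' := by
    rintro rfl
    rcases hy with ⟨hy, hny⟩ | ⟨hy, hny⟩
    exacts [hny (hwu y hy ▸ hw'), hny (hwu' y hy ▸ hw)]
  refine Set.ncard_eq_two.mpr ⟨w, w', hww', Set.ext fun y => ?_⟩
  rw [SimpleGraph.mem_neighborSet, symmDiff_adj, Set.mem_insert_iff, Set.mem_singleton_iff]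
  grind

lemma Subgraph.IsMatching.isAlternating_symmDiff_left (hM : M.IsMatching) (hM' : M'.IsMatching) :
    (M.spanningCoe ∆ M'.spanningCoe).IsAlternating M.spanningCoe := by
  intro v w w' hww' hvw hvw'
  simp only [symmDiff_adj, Subgraph.spanningCoe_adj] at *
  grind [hM.eq_of_adj_left, hM'.eq_of_adj_left]

lemma IsCycles.exists_isAltCycle [Finite V] (hC : C.IsCycles) (hCG : C ≤ G)
    (halt : C.IsAlternating M.spanningCoe) (hne : C ≠ ⊥) :
    ∃ (v : V) (c : G.Walk v v), IsAltCycle G M c := by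
  obtain ⟨v, w, hvw⟩ := ne_bot_iff_exists_adj.mp hne
  obtain ⟨c, hc, -⟩ := hC.exists_cycle_toSubgraph_verts_eq_connectedComponentSupp
    (c := C.connectedComponentMk v) rfl ⟨w, hvw⟩
  refine ⟨v, c.mapLe hCG, hc.mapLe hCG, halt.mono fun x y hxy => ?_⟩
  exact (Walk.adj_toSubgraph_mapLe hCG).mp hxy |>.adj_sub

end SimpleGraph

theorem isURMatching_iff_no_alternating_cycle {V : Type*} [Fintype V] (G : SimpleGraph V)
    (M : G.Subgraph) (hM : M.IsMatching) :
    IsURMatching G M ↔ ¬ ∃ (v : V) (cyc : G.Walk v v), IsAltCycle G M cyc := by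
  constructor
  · rintro ⟨-, hunique⟩ ⟨v, c, hc, halt⟩
    obtain ⟨M', hM', hverts, hM'M⟩ := hM.exists_isMatching_symmDiff c.toSubgraph.spanningCoe_le
      hc.isCycles_spanningCoe_toSubgraph halt
    have hbot : c.toSubgraph.spanningCoe = ⊥ := by
      rw [← symmDiff_eq_left, ← hM'M, hunique M' hM' hverts]
    exact hbot.le (c.toSubgraph_adj_snd hc.not_nil)
  · refine fun hno => ⟨hM, fun M' hM' hverts => by_contra fun hne => hno ?_⟩
    refine (hM.symmDiff_isCycles hM' hverts.symm).exists_isAltCycle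
      (symmDiff_le_sup.trans (sup_le M.spanningCoe_le M'.spanningCoe_le))
      (hM.isAlternating_symmDiff_left hM') ?_
    rw [Ne, symmDiff_eq_bot]
    exact fun h => hne (Subgraph.ext hverts (Subgraph.spanningCoe_inj.mp h).symm)
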